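/- arXiv:1406.7666 — 2 statements merged into one kernel-verified Lean document; each statement's English description precedes it below -/
import Mathlib

section
/- Let M be a model category with generating cofibrations I (so that trivial fibrations are exactly the maps with the right lifting property against I), let A be a category with terminal object and U : A → M a right adjoint with left adjoint F, and let Γ : Arr(M) → (M ↓ U) be the left adjoint of the forgetful functor Π : (M ↓ U) → Arr(M). Define K(I) = { Γ(α↓) : α ∈ I }. Then an object F of (M ↓ U) is K(I)-injective (the unique map F → ∗ has the right lifting property against every member of K(I)) if and only if the underlying morphism of F is a trivial fibration in M. In particular, every K(I)-injective object is a QS-object. -/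
open CategoryTheory CategoryTheory.Limits

universe v₁ v₂ u₁ u₂

variable {M : Type u₁} [Category.{v₁} M] {A : Type u₂} [Category.{v₂} A]

/-- The morphism `α↓ : α ⟶ id_V` in the arrow category, with components
`(α, id_V)`. -/
@[simps!]
def alphaDown {U V : M} (α : U ⟶ V) : Arrow.mk α ⟶ Arrow.mk (𝟙 V) :=
  Arrow.homMk (u := α) (v := 𝟙 V) (by simp)

/-- The left adjoint `Γ : Arr(M) ⥤ (M ↓ U)` of the forgetful functor, sending
`f : f₀ ⟶ f₁` to `f₀ ⟶ f₁ ⟶ U(F(f₁))`. -/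
@[simps]
def GammaFunctor (U : A ⥤ M) (F : M ⥤ A) (adj : F ⊣ U) :
    Arrow M ⥤ Comma (𝟭 M) U where
  obj f := { left := f.left, right := F.obj f.right,
             hom := f.hom ≫ adj.unit.app f.right }
  map χ :=
    { left := χ.left, right := F.map χ.right,
      w := by
        have h := χ.w
        dsimp at h ⊢
        rw [reassoc_of% h,
          show χ.right ≫ adj.unit.app _ = adj.unit.app _ ≫ U.map (F.map χ.right) from by
            simpa using adj.unit.naturality χ.right]
        simp }

/-- The unique morphism from `F` to the terminal object `ι(∗) = id_{U(∗)}` of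
`(M ↓ U)`. -/
noncomputable def toTermComma (U : A ⥤ M) [HasTerminal A] (F : Comma (𝟭 M) U) :
    F ⟶ ({ left := U.obj (⊤_ A), right := ⊤_ A, hom := 𝟙 _ } : Comma (𝟭 M) U) :=
  { left := F.hom ≫ U.map (terminal.from F.right),
    right := terminal.from F.right,
    w := by simp }

lemma key_lift_iff (U : A ⥤ M) [HasTerminal A] (F' : M ⥤ A) (adj : F' ⊣ U)
    {a b : M} (α : a ⟶ b) (F : Comma (𝟭 M) U) :
    HasLiftingProperty ((GammaFunctor U F' adj).map (alphaDown α)) (toTermComma U F) ↔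
      HasLiftingProperty α F.hom := by
  constructor
  · intro h
    constructor
    intro f g sq
    -- build the comma-category lifting problem
    let top : (GammaFunctor U F' adj).obj (Arrow.mk α) ⟶ F :=
      { left := f
        right := (adj.homEquiv b F.right).symm g
        w := by
          dsimp [GammaFunctor]
          rw [Category.assoc, ← adj.homEquiv_unit, Equiv.apply_symm_apply, sq.w] }
    let bot : (GammaFunctor U F' adj).obj (Arrow.mk (𝟙 b)) ⟶
        ({ left := U.obj (⊤_ A), right := ⊤_ A, hom := 𝟙 _ } : Comma (𝟭 M) U) :=
      { left := adj.unit.app b ≫ U.map (terminal.from _)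
        right := terminal.from _
        w := by simp [GammaFunctor] }
    have csq : CommSq top ((GammaFunctor U F' adj).map (alphaDown α))
        (toTermComma U F) bot := by
      constructor
      apply CommaMorphism.ext
      · dsimp [top, bot, toTermComma, GammaFunctor]
        have hg : f ≫ F.hom = α ≫ g := sq.w
        rw [← Category.assoc, hg, Category.assoc,
          ← Equiv.apply_symm_apply (adj.homEquiv b F.right) g, adj.homEquiv_unit,
          Category.assoc, ← U.map_comp, terminal.comp_from]
        rfl
      · exact Subsingleton.elim _ _
    obtain ⟨L⟩ := (h.sq_hasLift csq).exists_lift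
    refine CommSq.HasLift.mk' ⟨L.l.left, ?_, ?_⟩
    · have := congrArg CommaMorphism.left L.fac_left
      simp [top] at this
      exact this
    · have hr := congrArg CommaMorphism.right L.fac_left
      dsimp [top, GammaFunctor, alphaDown_right] at hr
      replace hr : L.l.right = (adj.homEquiv b F.right).symm g :=
        (Category.id_comp _).symm.trans ((congrArg (· ≫ L.l.right) (F'.map_id b)).symm.trans hr)
      have hw := L.l.w
      dsimp [GammaFunctor] at hw
      replace hw : L.l.left ≫ F.hom = adj.unit.app b ≫ U.map L.l.right :=
        hw.trans (by rw [Category.id_comp] :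
          (𝟙 b ≫ adj.unit.app b) ≫ U.map L.l.right = adj.unit.app b ≫ U.map L.l.right)
      have key : adj.unit.app b ≫ U.map ((adj.homEquiv b F.right).symm g) = g :=
        (adj.homEquiv_apply_eq _ g).mpr rfl
      exact hw.trans ((congrArg (fun x => adj.unit.app b ≫ U.map x) hr).trans key)
  · intro h
    constructor
    intro t bt sq
    have msq : CommSq t.left α F.hom (adj.unit.app b ≫ U.map t.right) := by
      constructor
      have := t.w
      dsimp [GammaFunctor] at this
      exact this.trans (Category.assoc _ _ _)
    obtain ⟨l, hl1, hl2⟩ := (h.sq_hasLift msq).exists_lift.some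
    refine CommSq.HasLift.mk'
      ⟨{ left := l, right := t.right, w := by dsimp [GammaFunctor]; rw [hl2, Category.id_comp] },
        ?_, ?_⟩
    · apply CommaMorphism.ext
      · simpa [GammaFunctor] using hl1
      · simp [GammaFunctor]
    · apply CommaMorphism.ext
      · dsimp [toTermComma]
        have hbt := bt.w
        dsimp [GammaFunctor] at hbt
        replace hbt : bt.left = adj.unit.app b ≫ U.map bt.right := (Category.comp_id _).symm.trans
          (hbt.trans (by rw [Category.id_comp] :
            (𝟙 b ≫ adj.unit.app b) ≫ U.map bt.right = adj.unit.app b ≫ U.map bt.right))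
        change l ≫ F.hom ≫ U.map (terminal.from F.right) = bt.left
        refine Eq.trans ?_ hbt.symm
        calc l ≫ F.hom ≫ U.map (terminal.from F.right)
            = (l ≫ F.hom) ≫ U.map (terminal.from F.right) := (Category.assoc _ _ _).symm
          _ = (adj.unit.app b ≫ U.map t.right) ≫ U.map (terminal.from F.right) :=
            congrArg (· ≫ U.map (terminal.from F.right)) hl2
          _ = adj.unit.app b ≫ U.map (t.right ≫ terminal.from F.right) :=
            (Category.assoc _ _ _).trans (congrArg _ (U.map_comp _ _).symm)
          _ = adj.unit.app b ≫ U.map bt.right := congrArg (fun x => adj.unit.app b ≫ U.map x)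
            (Subsingleton.elim (t.right ≫ terminal.from F.right) bt.right)
      · exact Subsingleton.elim _ _

/-- let `I` be a set of generating cofibrations of `M` (so that
the trivial fibrations are exactly the maps with the RLP against `I`), let `A`
have a terminal object, and let `U : A ⥤ M` be a right adjoint. An object `F`
of `(M ↓ U)` is `K(I)`-injective — i.e. `F ⟶ ∗` has the RLP against every
`Γ(α↓)` with `α ∈ I` — if and only if the underlying morphism of `F` is a
trivial fibration in `M`; in particular every `K(I)`-injective object is a
QS-object (its underlying morphism is a weak equivalence). -/
theorem stmt11 (U : A ⥤ M) [HasTerminal A] (F' : M ⥤ A) (adj : F' ⊣ U)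
    (I W TrivFib : MorphismProperty M)
    (hTF : ∀ ⦃X Y : M⦄ (p : X ⟶ Y),
      TrivFib p ↔ ∀ ⦃a b : M⦄ (α : a ⟶ b), I α → HasLiftingProperty α p)
    (hTFW : ∀ ⦃X Y : M⦄ (p : X ⟶ Y), TrivFib p → W p)
    (F : Comma (𝟭 M) U) :
    ((∀ ⦃a b : M⦄ (α : a ⟶ b), I α →
        HasLiftingProperty ((GammaFunctor U F' adj).map (alphaDown α))
          (toTermComma U F)) ↔ TrivFib F.hom) ∧
      ((∀ ⦃a b : M⦄ (α : a ⟶ b), I α →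
          HasLiftingProperty ((GammaFunctor U F' adj).map (alphaDown α))
            (toTermComma U F)) → W F.hom) := by
  have hiff : (∀ ⦃a b : M⦄ (α : a ⟶ b), I α →
      HasLiftingProperty ((GammaFunctor U F' adj).map (alphaDown α))
        (toTermComma U F)) ↔ TrivFib F.hom := by
    rw [hTF]
    constructor
    · intro h a b α hα
      exact (key_lift_iff U F' adj α F).mp (h α hα)
    · intro h a b α hα
      exact (key_lift_iff U F' adj α F).mpr (h α hα)
  exact ⟨hiff, fun h => hTFW _ (hiff.mp h)⟩
end

section
/- With notation as above (M a cofibrantly generated model category with generating cofibrations I, U : A → M a right adjoint with A having a terminal object), every object of (M ↓ U) lying in the image of the inclusion ι : A → (M ↓ U) (i.e. supported by an identity morphism id_{U(b)}) is K(I)-injective. -/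
open CategoryTheory CategoryTheory.Limits

universe v₁ v₂ u₁ u₂

variable {M : Type u₁} [Category.{v₁} M] {A : Type u₂} [Category.{v₂} A]

/-- The inclusion `ι : A ⥤ (M ↓ U)` sending `b` to `id_{U(b)}`. -/
@[simps]
def iotaFunctor (U : A ⥤ M) : A ⥤ Comma (𝟭 M) U where
  obj b := { left := U.obj b, right := b, hom := 𝟙 (U.obj b) }
  map f := { left := U.map f, right := f }

/-- every object of `(M ↓ U)` lying in the image of
`ι : A ⥤ (M ↓ U)` (i.e. supported by an identity `id_{U(b)}`) is
`K(I)`-injective, where `K(I) = { Γ(α↓) : α ∈ I }`. -/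
theorem stmt12 (U : A ⥤ M) [HasTerminal A] (F' : M ⥤ A) (adj : F' ⊣ U)
    (I : MorphismProperty M) (b : A) :
    ∀ ⦃a c : M⦄ (α : a ⟶ c), I α →
      HasLiftingProperty ((GammaFunctor U F' adj).map (alphaDown α))
        (toTermComma U ((iotaFunctor U).obj b)) := by
  intro a c α _
  constructor
  intro f g sq
  have hf := f.w
  have hg := g.w
  dsimp at hf hg
  simp only [Category.comp_id, Category.id_comp] at hf hg
  refine ⟨⟨⟨{ left := adj.unit.app c ≫ U.map f.right, right := f.right,
               w := by simp; exact Category.comp_id _ }, ?_, ?_⟩⟩⟩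
  · ext
    · dsimp
      simp only [iotaFunctor_obj_hom, GammaFunctor_obj_hom, Arrow.mk_hom, Category.comp_id] at hf
      simp only [alphaDown_left, GammaFunctor_map_left]
      exact (Category.assoc _ _ _).symm.trans (hf.symm.trans (Category.comp_id _))
    · simp
      exact Category.id_comp _
  · ext
    · dsimp [toTermComma]
      rw [hg]
      have h : g.right = f.right ≫ terminal.from b := terminal.hom_ext _ _
      rw [h]
      simp [← Functor.map_comp]
      exact (Category.assoc _ _ _).trans (congrArg (adj.unit.app c ≫ ·)
        ((congrArg (U.map f.right ≫ ·) (Category.id_comp _)).trans (U.map_comp _ _).symm))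
end
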